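/- Let d ≥ 1, α ∈ ℝ^d with α_i > 0 and ∑ α_i = 1, and φ(w) = ∏_i w_i^{α_i}. If g*_{r_i} = (p α_i μ - 1)/r_i for all i where μ = φ(-g*_r), p < 0, r > 0, then φ(r) = ∏_i (-p α_i + μ^{-1})^{α_i}; i.e., μ^{-1} is the unique root of y ↦ ∑_i α_i log(y - p α_i) - log φ(r). -/

import Mathlib

/-! The stationarity condition says `r i * v i = 1 - p * α i * μ`, i.e. `μ⁻¹ - p * α i = μ⁻¹ * (r i * v i)`.
The weighted geometric mean `φ w = ∏ i, w i ^ α i` is multiplicative and, because the weights sum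
to one, positively homogeneous; applying it gives `φ (μ⁻¹ - p α) = μ⁻¹ * φ r * φ v = φ r`, since
`φ v = μ`. Taking logarithms shows that `μ⁻¹` is a root of `y ↦ ∑ i, α i * log (y - p * α i) - log (φ r)`,
and this function is strictly increasing where all its logarithms have positive arguments. -/

open Finset

namespace Real

variable {ι : Type*} [Fintype ι] {α : ι → ℝ}

theorem prod_mul_rpow {v w : ι → ℝ} (hv : ∀ i, 0 ≤ v i) (hw : ∀ i, 0 ≤ w i) :
    ∏ i, (v i * w i) ^ α i = (∏ i, v i ^ α i) * ∏ i, w i ^ α i := by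
  rw [← prod_mul_distrib]
  exact prod_congr rfl fun i _ => mul_rpow (hv i) (hw i)

theorem prod_const_mul_rpow_of_sum_eq_one (hα : ∑ i, α i = 1) {c : ℝ} (hc : 0 < c)
    {w : ι → ℝ} (hw : ∀ i, 0 ≤ w i) :
    ∏ i, (c * w i) ^ α i = c * ∏ i, w i ^ α i := by
  rw [prod_mul_rpow (fun _ => hc.le) hw, ← rpow_sum_of_pos hc, hα, rpow_one]

theorem log_prod_rpow {w : ι → ℝ} (hw : ∀ i, 0 < w i) :
    log (∏ i, w i ^ α i) = ∑ i, α i * log (w i) := by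
  rw [log_prod fun i _ => (rpow_pos_of_pos (hw i) _).ne']
  exact sum_congr rfl fun i _ => log_rpow (hw i) _

theorem strictMonoOn_sum_mul_log_sub [Nonempty ι] (hα : ∀ i, 0 < α i) (a : ι → ℝ) :
    StrictMonoOn (fun y => ∑ i, α i * log (y - a i)) {y | ∀ i, a i < y} := by
  intro y₁ hy₁ y₂ _ hlt
  refine sum_lt_sum_of_nonempty univ_nonempty fun i _ => ?_
  have hpos : 0 < y₁ - a i := sub_pos.mpr (hy₁ i)
  exact mul_lt_mul_of_pos_left (log_lt_log hpos (by linarith)) (hα i)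

end Real

theorem stmt_13_general (d : ℕ) (hd : 1 ≤ d) (α : Fin d → ℝ)
    (hα : ∀ i, 0 < α i) (hαsum : ∑ i, α i = 1)
    (p : ℝ) (r : Fin d → ℝ) (hr : ∀ i, 0 < r i)
    (v : Fin d → ℝ) (hv : ∀ i, 0 < v i)
    (μ : ℝ) (hμ : μ = ∏ i, (v i) ^ (α i))
    (hg : ∀ i, -(v i) = (p * α i * μ - 1) / r i) :
    (∏ i, (r i) ^ (α i)) = (∏ i, (-p * α i + μ⁻¹) ^ (α i)) ∧
    (∑ i, α i * Real.log (μ⁻¹ - p * α i) - Real.log (∏ i, (r i) ^ (α i)) = 0) ∧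
    ∀ y : ℝ, (∀ i, p * α i < y) →
      ∑ i, α i * Real.log (y - p * α i) - Real.log (∏ i, (r i) ^ (α i)) = 0 → y = μ⁻¹ := by
  have hμ_pos : 0 < μ := hμ ▸ prod_pos fun i _ => Real.rpow_pos_of_pos (hv i) _
  have hshift : ∀ i, μ⁻¹ - p * α i = μ⁻¹ * (r i * v i) := fun i => by
    have h := hg i
    rw [eq_div_iff (hr i).ne'] at h
    field_simp
    linarith
  have hshift_pos : ∀ i, p * α i < μ⁻¹ := fun i => by
    have : 0 < μ⁻¹ * (r i * v i) := by have := hr i; have := hv i; positivity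
    linarith [hshift i]
  have hφ : ∏ i, (μ⁻¹ - p * α i) ^ α i = ∏ i, r i ^ α i := by
    simp_rw [hshift]
    rw [Real.prod_const_mul_rpow_of_sum_eq_one hαsum (inv_pos.mpr hμ_pos)
        fun i => (mul_pos (hr i) (hv i)).le,
      Real.prod_mul_rpow (fun i => (hr i).le) (fun i => (hv i).le), ← hμ]
    field_simp
  have hroot : ∑ i, α i * Real.log (μ⁻¹ - p * α i) - Real.log (∏ i, r i ^ α i) = 0 := by
    rw [← hφ, Real.log_prod_rpow fun i => sub_pos.mpr (hshift_pos i), sub_self]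
  refine ⟨?_, hroot, fun y hy hy_root => ?_⟩
  · simp_rw [← hφ, neg_mul, neg_add_eq_sub]
  · have : Nonempty (Fin d) := Fin.pos_iff_nonempty.mp hd
    exact (Real.strictMonoOn_sum_mul_log_sub hα _).injOn hy hshift_pos (by linarith)

theorem stmt_13 (d : ℕ) (hd : 1 ≤ d) (α : Fin d → ℝ)
    (hα : ∀ i, 0 < α i) (hαsum : ∑ i, α i = 1)
    (p : ℝ) (r : Fin d → ℝ) (hp : p < 0) (hr : ∀ i, 0 < r i)
    (v : Fin d → ℝ) (hv : ∀ i, 0 < v i)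
    (μ : ℝ) (hμ : μ = ∏ i, (v i) ^ (α i))
    (hg : ∀ i, -(v i) = (p * α i * μ - 1) / r i) :
    (∏ i, (r i) ^ (α i)) = (∏ i, (-p * α i + μ⁻¹) ^ (α i)) ∧
    (∑ i, α i * Real.log (μ⁻¹ - p * α i) - Real.log (∏ i, (r i) ^ (α i)) = 0) ∧
    ∀ y : ℝ, (∀ i, p * α i < y) →
      ∑ i, α i * Real.log (y - p * α i) - Real.log (∏ i, (r i) ^ (α i)) = 0 → y = μ⁻¹ :=
  stmt_13_general d hd α hα hαsum p r hr v hv μ hμ hg
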